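/- arXiv:1009.1512 — 6 statements merged into one kernel-verified Lean document; each statement's English description precedes it below -/
import Mathlib

section
/- Let Γ = (V, E) be a finite simple graph and let S ⊆ V be an independent set (no two vertices of S are joined by an edge). Then |S| ≤ ϑ(Γ), where ϑ(Γ) is the Lovász theta number of Γ. Consequently the independence number α(Γ) satisfies α(Γ) ≤ ϑ(Γ). -/
/-!
Testing a positive semidefinite `B` against `eᵢ - eⱼ` gives `B i j + B j i ≤ B i i + B j j`, so the
entries of a feasible matrix sum to at most `|V|`: the supremum defining `ϑ` is finite, and it is
nonnegative since the entry sum is `𝟙ᵀ B 𝟙 ≥ 0`. A nonempty independent set `S` gives the feasible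
matrix `|S|⁻¹ 𝟙_S 𝟙_Sᵀ`, whose entries sum to `|S|`; and `α` is attained by an independent set.
-/

open Finset

/-- The feasible values of the Lovász theta SDP of a finite graph `G`:
values `∑_{i,j} B i j` over real symmetric positive semidefinite matrices `B`
with `∑ i, B i i = 1` and `B i j = 0` on edges. -/
def lovaszThetaSet {V : Type*} [Fintype V] (G : SimpleGraph V) : Set ℝ :=
  {s | ∃ B : Matrix V V ℝ, B.PosSemidef ∧ (∑ i, B i i) = 1 ∧
    (∀ i j, G.Adj i j → B i j = 0) ∧ s = ∑ i, ∑ j, B i j}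

/-- The Lovász theta number of a finite graph. -/
noncomputable def lovaszTheta {V : Type*} [Fintype V] (G : SimpleGraph V) : ℝ :=
  sSup (lovaszThetaSet G)

/-- The independence number of a finite graph: the maximal cardinality of a set of
vertices no two of which are adjacent. -/
noncomputable def indepNum {V : Type*} [Fintype V] (G : SimpleGraph V) : ℕ :=
  sSup {m | ∃ S : Finset V, (∀ i ∈ S, ∀ j ∈ S, ¬ G.Adj i j) ∧ S.card = m}

namespace Matrix.PosSemidef

variable {n : Type*} [Fintype n] {B : Matrix n n ℝ}

theorem sum_apply_nonneg (hB : B.PosSemidef) : 0 ≤ ∑ i, ∑ j, B i j := by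
  simpa [dotProduct, mulVec, Finset.mul_sum] using hB.dotProduct_mulVec_nonneg 1

theorem apply_add_apply_le_add_diag (hB : B.PosSemidef) (i j : n) :
    B i j + B j i ≤ B i i + B j j := by
  classical
  have h := hB.dotProduct_mulVec_nonneg (Pi.single i 1 - Pi.single j 1)
  simp only [mulVec_sub, dotProduct_sub, sub_dotProduct, star_trivial, mulVec_single_one,
    single_one_dotProduct, col_apply] at h
  linarith

theorem sum_apply_le_card_mul_trace (hB : B.PosSemidef) :
    ∑ i, ∑ j, B i j ≤ Fintype.card n * B.trace := by
  have h2 : 2 * ∑ i, ∑ j, B i j = ∑ i, ∑ j, (B i j + B j i) := by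
    simp only [Finset.sum_add_distrib]
    rw [Finset.sum_comm (f := fun i j ↦ B j i), two_mul]
  have hdiag : ∑ i : n, ∑ j : n, (B i i + B j j) = 2 * (Fintype.card n * B.trace) := by
    simp only [Finset.sum_add_distrib, Finset.sum_const, Finset.card_univ, nsmul_eq_mul,
      ← Finset.mul_sum, trace, diag_apply]
    ring
  have hle : ∑ i, ∑ j, (B i j + B j i) ≤ ∑ i, ∑ j, (B i i + B j j) :=
    Finset.sum_le_sum fun i _ ↦ Finset.sum_le_sum fun j _ ↦ hB.apply_add_apply_le_add_diag i j
  linarith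

end Matrix.PosSemidef

section

open Matrix

variable {V : Type*} [Fintype V] (G : SimpleGraph V)

theorem lovaszThetaSet_bddAbove : BddAbove (lovaszThetaSet G) :=
  ⟨Fintype.card V, by
    rintro s ⟨B, hB, htr, -, rfl⟩
    simpa [trace, htr] using hB.sum_apply_le_card_mul_trace⟩

theorem lovaszTheta_nonneg : 0 ≤ lovaszTheta G :=
  Real.sSup_nonneg <| by
    rintro s ⟨B, hB, -, -, rfl⟩
    exact hB.sum_apply_nonneg

theorem card_mem_lovaszThetaSet {S : Finset V} (hS : ∀ i ∈ S, ∀ j ∈ S, ¬ G.Adj i j)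
    (hne : S.Nonempty) : (#S : ℝ) ∈ lovaszThetaSet G := by
  classical
  set u : V → ℝ := fun i ↦ if i ∈ S then 1 else 0
  have hcard : (#S : ℝ) ≠ 0 := by simp [hne.ne_empty]
  have hsum : ∑ i, u i = #S := by simp [u]
  have hsq : ∀ i, u i * u i = u i := fun i ↦ by by_cases hi : i ∈ S <;> simp [u, hi]
  refine ⟨(#S : ℝ)⁻¹ • vecMulVec u u, ?_, ?_, ?_, ?_⟩
  · simpa using (posSemidef_vecMulVec_self_star u).smul (inv_nonneg.2 (Nat.cast_nonneg #S))
  · simp [vecMulVec_apply, hsq, ← mul_sum, hsum, hcard]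
  · intro i j hij
    have hu : u i * u j = 0 := by
      by_cases hi : i ∈ S
      · have hj : j ∉ S := fun hj ↦ hS i hi j hj hij
        simp [u, hj]
      · simp [u, hi]
    simp [vecMulVec_apply, hu]
  · simp only [Matrix.smul_apply, vecMulVec_apply, smul_eq_mul, ← mul_sum, ← sum_mul, hsum]
    field_simp

theorem card_le_lovaszTheta {S : Finset V} (hS : ∀ i ∈ S, ∀ j ∈ S, ¬ G.Adj i j) :
    (#S : ℝ) ≤ lovaszTheta G := by
  rcases S.eq_empty_or_nonempty with rfl | hne
  · simpa using lovaszTheta_nonneg G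
  · exact le_csSup (lovaszThetaSet_bddAbove G) (card_mem_lovaszThetaSet G hS hne)

theorem exists_card_eq_indepNum :
    ∃ S : Finset V, (∀ i ∈ S, ∀ j ∈ S, ¬ G.Adj i j) ∧ #S = indepNum G :=
  Nat.sSup_mem (s := {m | ∃ S : Finset V, (∀ i ∈ S, ∀ j ∈ S, ¬ G.Adj i j) ∧ #S = m})
    ⟨0, ∅, by simp, rfl⟩
    ⟨Fintype.card V, by rintro m ⟨T, -, rfl⟩; exact card_le_univ T⟩

end

/-- Any independent set `S` of a finite graph `Γ` satisfies `|S| ≤ ϑ(Γ)`;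
consequently `α(Γ) ≤ ϑ(Γ)`. -/
theorem card_indep_le_lovaszTheta {V : Type*} [Fintype V] (Γ : SimpleGraph V)
    (S : Finset V) (hS : ∀ i ∈ S, ∀ j ∈ S, ¬ Γ.Adj i j) :
    (S.card : ℝ) ≤ lovaszTheta Γ ∧ (indepNum Γ : ℝ) ≤ lovaszTheta Γ := by
  refine ⟨card_le_lovaszTheta Γ hS, ?_⟩
  obtain ⟨T, hT, hTcard⟩ := exists_card_eq_indepNum Γ
  exact hTcard ▸ card_le_lovaszTheta Γ hT
end

section
/- Let Γ = (V, E) be a finite simple graph and let χ(Γ̄) denote the chromatic number of the complementary graph Γ̄. Then ϑ(Γ) ≤ χ(Γ̄), where ϑ(Γ) is the Lovász theta number of Γ. -/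
open Finset

open Matrix

/-!
Let `c` be a proper colouring of `Γᶜ` with `k` colours and `B` feasible for the theta SDP.
Writing `B = ∑ᵣ vᵣ vᵣᵀ`, Cauchy–Schwarz over the colour classes gives
`(∑ᵢ vᵣ i)² ≤ k ∑ₜ (∑_{c i = t} vᵣ i)²`, so `∑ᵢⱼ B i j ≤ k ∑_{c i = c j} B i j`. Two distinct
vertices of the same colour are adjacent in `Γ`, where `B` vanishes, so the right-hand side is
`k · tr B = k`.
-/

section Fiberwise

variable {n ι R : Type*} [Fintype n] [Fintype ι] [DecidableEq ι] (c : n → ι) (v : n → R)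

lemma sum_sq_sum_fiber_eq [CommSemiring R] :
    ∑ t, (∑ i with c i = t, v i) ^ 2 = ∑ i, ∑ j with c j = c i, v i * v j := by
  calc ∑ t, (∑ i with c i = t, v i) ^ 2
      = ∑ t, ∑ i with c i = t, v i * ∑ j with c j = c i, v j := by
        refine sum_congr rfl fun t _ => ?_
        rw [sq, sum_mul]
        refine sum_congr rfl fun i hi => ?_
        rw [(mem_filter.mp hi).2]
    _ = ∑ i, ∑ j with c j = c i, v i * v j := by
        rw [sum_fiberwise univ c fun i => v i * ∑ j with c j = c i, v j]
        simp only [mul_sum]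

lemma sq_sum_le_card_mul_sum_sum_fiber [CommSemiring R] [LinearOrder R] [IsStrictOrderedRing R]
    [ExistsAddOfLE R] :
    (∑ i, v i) ^ 2 ≤ Fintype.card ι * ∑ i, ∑ j with c j = c i, v i * v j := by
  rw [← sum_sq_sum_fiber_eq, ← sum_fiberwise univ c v]
  exact sq_sum_le_card_mul_sum_sq

end Fiberwise

theorem Matrix.PosSemidef.sum_le_card_mul_sum_fiber {n ι : Type*} [Fintype n] [Fintype ι]
    [DecidableEq ι] {M : Matrix n n ℝ} (hM : M.PosSemidef) (c : n → ι) :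
    ∑ i, ∑ j, M i j ≤ Fintype.card ι * ∑ i, ∑ j with c j = c i, M i j := by
  obtain ⟨m, v, rfl⟩ := posSemidef_iff_eq_sum_vecMulVec.mp hM
  have sum_rank_one_comm : ∀ s : n → Finset n, ∑ i, ∑ j ∈ s i, ∑ r, v r i * v r j
      = ∑ r, ∑ i, ∑ j ∈ s i, v r i * v r j := fun s => by
    rw [sum_comm]
    exact sum_congr rfl fun i _ => sum_comm
  simp only [sum_apply, vecMulVec_apply, star_trivial]
  rw [sum_rank_one_comm, sum_rank_one_comm, mul_sum]
  refine sum_le_sum fun r _ => ?_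
  rw [← sum_mul_sum, ← sq]
  exact sq_sum_le_card_mul_sum_sum_fiber c (v r)

lemma SimpleGraph.Coloring.sum_sum_sameColor_eq_trace {V α R : Type*} [Fintype V]
    [DecidableEq α] [AddCommMonoid R] {G : SimpleGraph V} (c : Gᶜ.Coloring α) {B : Matrix V V R}
    (hB : ∀ i j, G.Adj i j → B i j = 0) : ∑ i, ∑ j with c j = c i, B i j = B.trace := by
  refine sum_congr rfl fun i _ => sum_eq_single_of_mem i (by simp) fun j hj hji => hB i j ?_
  by_contra hG
  exact c.valid ((SimpleGraph.compl_adj G i j).mpr ⟨hji.symm, hG⟩) (mem_filter.mp hj).2.symm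

/-- Lovász's sandwich theorem, upper part: `ϑ(Γ) ≤ χ(Γ̄)`, the chromatic number of the
complementary graph. -/
theorem lovaszTheta_le_chromaticNumber_compl {V : Type*} [Fintype V]
    (Γ : SimpleGraph V) :
    lovaszTheta Γ ≤ ((Γᶜ.chromaticNumber).toNat : ℝ) := by
  obtain ⟨c⟩ := Γᶜ.colorable_chromaticNumber_of_fintype
  refine Real.sSup_le ?_ (Nat.cast_nonneg _)
  rintro _ ⟨B, hB, htrace, hB_adj, rfl⟩
  calc ∑ i, ∑ j, B i j
      ≤ Fintype.card (Fin _) * ∑ i, ∑ j with c j = c i, B i j :=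
        hB.sum_le_card_mul_sum_fiber c
    _ = _ := by
        rw [c.sum_sum_sameColor_eq_trace hB_adj, show B.trace = 1 from htrace, Fintype.card_fin,
          mul_one]
end

section
/- For every subset C ⊆ H_n of the binary Hamming space and every 0 ≤ k ≤ n, the Krawtchouk polynomials satisfy the positivity property Σ_{(x,y) ∈ C²} K_k^n(d_H(x,y)) ≥ 0. -/
open Finset

/-- The Krawtchouk polynomial `K_k^n(t) = ∑_{j=0}^k (−1)^j C(t,j) C(n−t,k−j)`,
evaluated at a natural number `t`. -/
def krawtchouk (n k t : ℕ) : ℝ :=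
  ∑ j ∈ Finset.range (k + 1),
    (-1 : ℝ) ^ j * (Nat.choose t j : ℝ) * (Nat.choose (n - t) (k - j) : ℝ)

/-!
With the Walsh characters `χ_S(x) = (-1)^{∑_{i ∈ S} x_i}` of `𝔽₂^n` one has
`K_k^n(d_H(x,y)) = ∑_{|S| = k} χ_S(x) χ_S(y)`: the product `χ_S(x) χ_S(y)` is
`(-1)^{|S ∩ T|}` for `T` the support of `x - y`, and exactly `C(|T|,j) C(n-|T|,k-j)` of the
`k`-sets `S` meet `T` in `j` points. Hence the double sum over `C` equals
`∑_{|S| = k} (∑_{x ∈ C} χ_S(x))^2 ≥ 0`.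
-/

section Counting

variable {α : Type*} [Fintype α] [DecidableEq α]

theorem card_filter_card_inter_eq (T : Finset α) {j k : ℕ} (hj : j ≤ k) :
    #{S ∈ univ.powersetCard k | #(S ∩ T) = j} = (#T).choose j * (#Tᶜ).choose (k - j) := by
  rw [← card_powersetCard, ← card_powersetCard, ← card_product]
  refine card_nbij' (fun S ↦ (S ∩ T, S \ T)) (fun p ↦ p.1 ∪ p.2) ?_ ?_ ?_ ?_
  · intro S hS
    simp only [coe_filter, mem_powersetCard, subset_univ, true_and, Set.mem_ofPred_eq] at hS
    simp only [coe_product, Set.mem_prod, mem_coe, mem_powersetCard]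
    have := card_inter_add_card_sdiff S T
    refine ⟨⟨inter_subset_right, hS.2⟩, fun a ↦ by simp +contextual, by omega⟩
  · rintro ⟨A, B⟩ hAB
    simp only [coe_product, Set.mem_prod, mem_coe, mem_powersetCard,
      subset_compl_iff_disjoint_right] at hAB
    obtain ⟨⟨hAT, rfl⟩, hBT, hB⟩ := hAB
    have hdisj : Disjoint A B := (hBT.mono_right hAT).symm
    simp only [coe_filter, mem_powersetCard, subset_univ, true_and, Set.mem_ofPred_eq]
    rw [card_union_of_disjoint hdisj, union_inter_distrib_right, inter_eq_left.2 hAT,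
      disjoint_iff_inter_eq_empty.1 hBT, union_empty]
    omega
  · intro S _
    exact sup_inf_sdiff S T
  · rintro ⟨A, B⟩ hAB
    simp only [coe_product, Set.mem_prod, mem_coe, mem_powersetCard,
      subset_compl_iff_disjoint_right] at hAB
    obtain ⟨⟨hAT, -⟩, hBT, -⟩ := hAB
    have := disjoint_left.1 hBT
    ext a <;> grind

theorem sum_powersetCard_neg_one_pow_card_inter (T : Finset α) (k : ℕ) :
    ∑ S ∈ univ.powersetCard k, (-1 : ℝ) ^ #(S ∩ T) = krawtchouk (Fintype.card α) k #T := by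
  have hmaps : ∀ S ∈ univ.powersetCard k, #(S ∩ T) ∈ range (k + 1) := fun S hS ↦
    mem_range_succ_iff.2 <| (card_le_card inter_subset_left).trans (mem_powersetCard.1 hS).2.le
  rw [← sum_fiberwise_of_maps_to hmaps, krawtchouk]
  refine sum_congr rfl fun j hj ↦ ?_
  rw [sum_congr rfl fun S hS ↦ by rw [(mem_filter.1 hS).2], sum_const,
    card_filter_card_inter_eq T (mem_range_succ_iff.1 hj), card_compl, nsmul_eq_mul]
  push_cast
  ring

end Counting

def zmodTwoSign (a : ZMod 2) : ℝ := if a = 0 then 1 else -1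

theorem zmodTwoSign_mul_zmodTwoSign (a b : ZMod 2) :
    zmodTwoSign a * zmodTwoSign b = if a = b then 1 else -1 := by
  have h : ∀ c : ZMod 2, c = 0 ∨ c = 1 := by decide
  rcases h a with rfl | rfl <;> rcases h b with rfl | rfl <;> norm_num [zmodTwoSign]

section Walsh

variable {ι : Type*}

def walshChar (S : Finset ι) (x : ι → ZMod 2) : ℝ := ∏ i ∈ S, zmodTwoSign (x i)

theorem walshChar_mul_walshChar (S : Finset ι) (x y : ι → ZMod 2) :
    walshChar S x * walshChar S y = (-1) ^ #{i ∈ S | x i ≠ y i} := by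
  simp only [walshChar, ← prod_mul_distrib, zmodTwoSign_mul_zmodTwoSign, prod_ite,
    prod_const_one, prod_const, one_mul]

theorem sum_powersetCard_walshChar_mul_walshChar [Fintype ι] [DecidableEq ι] (k : ℕ)
    (x y : ι → ZMod 2) :
    ∑ S ∈ univ.powersetCard k, walshChar S x * walshChar S y
      = krawtchouk (Fintype.card ι) k (hammingDist x y) := by
  refine (sum_congr rfl fun S _ ↦ ?_).trans (sum_powersetCard_neg_one_pow_card_inter _ k)
  rw [walshChar_mul_walshChar, inter_filter, inter_univ]

end Walsh

theorem sum_sum_sum_mul_self_nonneg {ι α : Type*} (I : Finset ι) (C : Finset α)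
    (f : ι → α → ℝ) : 0 ≤ ∑ x ∈ C, ∑ y ∈ C, ∑ S ∈ I, f S x * f S y := by
  calc 0 ≤ ∑ S ∈ I, (∑ x ∈ C, f S x) * ∑ y ∈ C, f S y :=
        sum_nonneg fun S _ ↦ mul_self_nonneg _
    _ = _ := by simp_rw [sum_mul_sum, sum_comm (s := I)]

theorem krawtchouk_positivity_general (n k : ℕ) (C : Finset (Fin n → ZMod 2)) :
    0 ≤ ∑ x ∈ C, ∑ y ∈ C, krawtchouk n k (hammingDist x y) := by
  simpa only [sum_powersetCard_walshChar_mul_walshChar, Fintype.card_fin]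
    using sum_sum_sum_mul_self_nonneg (univ.powersetCard k) C walshChar

/-- Positivity property of the Krawtchouk polynomials: for every code `C ⊆ H_n` and
every `0 ≤ k ≤ n`, `∑_{(x,y) ∈ C²} K_k^n(d_H(x,y)) ≥ 0`. -/
theorem krawtchouk_positivity (n k : ℕ) (hk : k ≤ n) (C : Finset (Fin n → ZMod 2)) :
    0 ≤ ∑ x ∈ C, ∑ y ∈ C, krawtchouk n k (hammingDist x y) :=
  krawtchouk_positivity_general n k C
end

section
/- (Characterization of invariant positive definite functions on the Hamming space.) Let B : H_n² → ℝ. Then the matrix (B(x,y))_{(x,y)∈H_n²} is symmetric positive semidefinite and B is Aut(H_n)-invariant (i.e., B(x+z, y+z) = B(x,y) for all z ∈ H_n, and B(π(x), π(y)) = B(x,y) for all coordinate permutations π ∈ S_n) if and only if there exist real numbers a_0, …, a_n ≥ 0 such that B(x,y) = Σ_{k=0}^n a_k K_k^n(d_H(x,y)) for all x, y ∈ H_n. -/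
/-!
The Walsh characters `χ_S(x) = (-1)^{∑_{i ∈ S} xᵢ}` diagonalise every translation-invariant
kernel `B(x, y) = f(x + y)`: `χ_Sᵀ B χ_S = 2ⁿ f̂(S)`, so `B` is positive semidefinite exactly
when all Walsh coefficients `f̂(S)` are nonnegative, and then `f = 2⁻ⁿ ∑_S f̂(S) χ_S` by
Fourier inversion. Invariance under coordinate permutations makes `f̂(S)` depend only on `|S|`, and
grouping the characters by size turns the expansion into Krawtchouk polynomials, since
`∑_{|S| = k} χ_S(x) χ_S(y)` is the coefficient of `X^k` in `(1 - X)^w (1 + X)^{n - w}` with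
`w = d_H(x, y)`. Conversely, each such sum is a Gram matrix, hence positive semidefinite.
-/

open Finset

open Polynomial

theorem Polynomial.coeff_one_sub_X_pow {R : Type*} [CommRing R] (m j : ℕ) :
    ((1 - X : R[X]) ^ m).coeff j = (-1) ^ j * m.choose j := by
  have : (1 - X : R[X]) ^ m = C ((-1) ^ m) * (X + C (-1)) ^ m := by
    rw [C_pow, ← mul_pow, C_neg, C_1]; ring
  rw [this, coeff_C_mul, coeff_X_add_C_pow]
  rcases le_or_gt j m with h | h
  · obtain ⟨d, rfl⟩ := Nat.exists_eq_add_of_le h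
    rw [Nat.add_sub_cancel_left, pow_add, mul_assoc, ← mul_assoc ((-1) ^ d), ← pow_add,
      Even.neg_one_pow ⟨d, rfl⟩, one_mul]
  · simp [Nat.choose_eq_zero_of_lt h]

theorem krawtchouk_eq_coeff (n k t : ℕ) :
    krawtchouk n k t = ((1 - X) ^ t * (1 + X) ^ (n - t) : ℝ[X]).coeff k := by
  rw [coeff_mul, Nat.sum_antidiagonal_eq_sum_range_succ
    (fun i j => ((1 - X : ℝ[X]) ^ t).coeff i * ((1 + X) ^ (n - t)).coeff j), krawtchouk]
  simp only [coeff_one_sub_X_pow, coeff_one_add_X_pow]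

section Hamming

variable {ι : Type*} [Fintype ι]

theorem hammingDist_add_right {β : ι → Type*} [∀ i, Add (β i)]
    [∀ i, IsRightCancelAdd (β i)] [∀ i, DecidableEq (β i)] (x y z : ∀ i, β i) :
    hammingDist (x + z) (y + z) = hammingDist x y := by
  simp only [hammingDist, Pi.add_apply, ne_eq, add_left_inj]

theorem hammingDist_comp_perm {β : Type*} [DecidableEq β] (π : Equiv.Perm ι) (x y : ι → β) :
    hammingDist (x ∘ π) (y ∘ π) = hammingDist x y := by
  simp only [hammingDist, card_filter, Function.comp_apply]
  exact Equiv.sum_comp π fun i => if x i ≠ y i then 1 else 0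

theorem hammingDist_eq_hammingNorm_add {β : ι → Type*} [∀ i, AddCommGroup (β i)]
    [∀ i, Module (ZMod 2) (β i)] [∀ i, DecidableEq (β i)] (x y : ∀ i, β i) :
    hammingDist x y = hammingNorm (x + y) := by
  rw [hammingDist_eq_hammingNorm, ZModModule.neg_eq_self, add_comm]

end Hamming

section Walsh

variable {ι : Type*}

noncomputable def walsh (S : Finset ι) (x : ι → ZMod 2) : ℝ := ∏ i ∈ S, (-1) ^ (x i).val

theorem walsh_add (S : Finset ι) (x y : ι → ZMod 2) :
    walsh S (x + y) = walsh S x * walsh S y := by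
  simp only [walsh, ← prod_mul_distrib, ← pow_add, Pi.add_apply, ZMod.val_add,
    ← neg_one_pow_eq_pow_mod_two]

theorem walsh_comp_perm (π : Equiv.Perm ι) (S : Finset ι) (x : ι → ZMod 2) :
    walsh S (x ∘ π) = walsh (S.map π.toEmbedding) x := by
  simp [walsh, prod_map]

theorem neg_one_pow_val_zmod_two (b : ZMod 2) :
    (-1 : ℝ) ^ b.val = if b = 0 then 1 else -1 := by
  obtain rfl | rfl : b = 0 ∨ b = 1 := by revert b; decide
  · simp
  · simp [ZMod.val_one]

variable [Fintype ι]

theorem sum_walsh (t : ι → ZMod 2) :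
    ∑ S, walsh S t = if t = 0 then 2 ^ Fintype.card ι else 0 := by
  rw [← powerset_univ]
  simp only [walsh, ← prod_one_add]
  split_ifs with ht
  · simp [ht, one_add_one_eq_two]
  · obtain ⟨i, hi⟩ := Function.ne_iff.1 ht
    exact prod_eq_zero (mem_univ i) (by simp_all [neg_one_pow_val_zmod_two])

theorem sum_walsh_mul_X_pow (t : ι → ZMod 2) :
    ∑ S, C (walsh S t) * X ^ #S =
      (1 - X) ^ hammingNorm t * (1 + X) ^ (Fintype.card ι - hammingNorm t) := by
  have hfactor (S : Finset ι) :
      C (walsh S t) * X ^ #S = ∏ i ∈ S, C ((-1) ^ (t i).val) * X := by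
    rw [prod_mul_distrib, prod_const, walsh, map_prod]
  have hzeros : #{i | t i = 0} = Fintype.card ι - hammingNorm t := by
    have := card_filter_add_card_filter_not (s := univ) (fun i => t i = 0)
    rw [card_univ] at this
    rw [hammingNorm]
    simp only [ne_eq]
    omega
  simp only [hfactor, ← powerset_univ, ← prod_one_add, neg_one_pow_val_zmod_two, apply_ite C,
    map_one, map_neg, ite_mul, one_mul, neg_one_mul, add_ite, ← sub_eq_add_neg]
  rw [prod_ite, prod_const, prod_const, mul_comm, hzeros, hammingNorm]

theorem sum_powersetCard_walsh (k : ℕ) (t : ι → ZMod 2) :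
    ∑ S ∈ powersetCard k univ, walsh S t = krawtchouk (Fintype.card ι) k (hammingNorm t) := by
  rw [krawtchouk_eq_coeff, ← sum_walsh_mul_X_pow, finsetSum_coeff]
  simp only [coeff_C_mul_X_pow]
  rw [← sum_filter]
  congr 1
  ext S
  simp [eq_comm]

theorem sum_powersetCard_walsh_mul_walsh (k : ℕ) (x y : ι → ZMod 2) :
    ∑ S ∈ powersetCard k univ, walsh S x * walsh S y =
      krawtchouk (Fintype.card ι) k (hammingDist x y) := by
  simp only [← walsh_add, sum_powersetCard_walsh, hammingDist_eq_hammingNorm_add]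

theorem posSemidef_krawtchouk (k : ℕ) :
    (Matrix.of fun x y : ι → ZMod 2 =>
      krawtchouk (Fintype.card ι) k (hammingDist x y)).PosSemidef := by
  let W : Matrix (ι → ZMod 2) (powersetCard k univ) ℝ := Matrix.of fun x S => walsh S.1 x
  convert Matrix.posSemidef_self_mul_conjTranspose W
  ext x y
  rw [Matrix.of_apply, ← sum_powersetCard_walsh_mul_walsh, ← sum_attach, ← univ_eq_attach]
  simp [W, Matrix.mul_apply]

variable [DecidableEq ι]

open scoped Matrix

noncomputable def walshTransform (f : (ι → ZMod 2) → ℝ) (S : Finset ι) : ℝ :=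
  ∑ x, f x * walsh S x

theorem walsh_dotProduct_mulVec_walsh (f : (ι → ZMod 2) → ℝ) (S : Finset ι) :
    walsh S ⬝ᵥ (Matrix.of (fun x y => f (x + y)) *ᵥ walsh S) =
      2 ^ Fintype.card ι * walshTransform f S := by
  calc walsh S ⬝ᵥ (Matrix.of (fun x y => f (x + y)) *ᵥ walsh S)
      = ∑ x, ∑ y, f (x + y) * walsh S (x + y) := by
        simp only [dotProduct, Matrix.mulVec, Matrix.of_apply, mul_sum, walsh_add]
        exact sum_congr rfl fun x _ => sum_congr rfl fun y _ => by ring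
    _ = ∑ x : ι → ZMod 2, walshTransform f S :=
        sum_congr rfl fun x _ => Equiv.sum_comp (Equiv.addLeft x) fun u => f u * walsh S u
    _ = 2 ^ Fintype.card ι * walshTransform f S := by
        simp [ZMod.card]

theorem walshTransform_nonneg {f : (ι → ZMod 2) → ℝ}
    (hf : (Matrix.of fun x y => f (x + y)).PosSemidef) (S : Finset ι) :
    0 ≤ walshTransform f S := by
  have := hf.dotProduct_mulVec_nonneg (walsh S)
  rw [star_trivial, walsh_dotProduct_mulVec_walsh] at this
  exact nonneg_of_mul_nonneg_right this (by positivity)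

theorem walshTransform_map_perm {f : (ι → ZMod 2) → ℝ}
    (hf : ∀ (π : Equiv.Perm ι) x, f (x ∘ π) = f x) (π : Equiv.Perm ι) (S : Finset ι) :
    walshTransform f (S.map π.toEmbedding) = walshTransform f S := by
  simp only [walshTransform, ← walsh_comp_perm]
  calc ∑ x, f x * walsh S (x ∘ π) = ∑ x, f (x ∘ π) * walsh S (x ∘ π) := by
        simp only [hf]
    _ = ∑ x, f x * walsh S x :=
        Equiv.sum_comp (π.symm.arrowCongr (Equiv.refl _)) fun x => f x * walsh S x

theorem walshTransform_eq_of_card_eq {f : (ι → ZMod 2) → ℝ}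
    (hf : ∀ (π : Equiv.Perm ι) x, f (x ∘ π) = f x) {S T : Finset ι} (h : #S = #T) :
    walshTransform f S = walshTransform f T := by
  obtain ⟨π, rfl⟩ := Equiv.Perm.exists_map_finset_eq S T h
  exact (walshTransform_map_perm hf π S).symm

theorem sum_walshTransform_mul_walsh (f : (ι → ZMod 2) → ℝ) (t : ι → ZMod 2) :
    ∑ S, walshTransform f S * walsh S t = 2 ^ Fintype.card ι * f t := by
  calc ∑ S, walshTransform f S * walsh S t = ∑ u, f u * ∑ S, walsh S (u + t) := by
        simp only [walshTransform, sum_mul, mul_sum, walsh_add, mul_assoc]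
        exact sum_comm
    _ = 2 ^ Fintype.card ι * f t := by
        simp [sum_walsh, add_eq_zero_iff_eq_neg, ZModModule.neg_eq_self, mul_comm]

theorem exists_nonneg_krawtchouk_expansion {f : (ι → ZMod 2) → ℝ}
    (hpsd : (Matrix.of fun x y => f (x + y)).PosSemidef)
    (hperm : ∀ (π : Equiv.Perm ι) x, f (x ∘ π) = f x) :
    ∃ a : ℕ → ℝ, (∀ k, 0 ≤ a k) ∧ ∀ t, f t = ∑ k ∈ range (Fintype.card ι + 1),
      a k * krawtchouk (Fintype.card ι) k (hammingNorm t) := by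
  choose! S hS using fun k (hk : k ≤ Fintype.card ι) =>
    exists_subset_card_eq (s := (univ : Finset ι)) (n := k) (by rwa [card_univ])
  refine ⟨fun k => walshTransform f (S k) / 2 ^ Fintype.card ι,
    fun k => div_nonneg (walshTransform_nonneg hpsd _) (by positivity), fun t => ?_⟩
  have hconst : ∀ k ∈ range (Fintype.card ι + 1), ∀ T ∈ powersetCard k univ,
      walshTransform f T = walshTransform f (S k) := fun k hk T hT =>
    walshTransform_eq_of_card_eq hperm <| by
      rw [(mem_powersetCard.1 hT).2, (hS k (Nat.lt_succ_iff.1 (mem_range.1 hk))).2]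
  calc f t = (∑ T, walshTransform f T * walsh T t) / 2 ^ Fintype.card ι := by
        rw [sum_walshTransform_mul_walsh]; field_simp
    _ = (∑ k ∈ range (Fintype.card ι + 1),
          walshTransform f (S k) * krawtchouk (Fintype.card ι) k (hammingNorm t)) /
            2 ^ Fintype.card ι := by
        rw [← powerset_univ, sum_powerset, card_univ]
        congr 1
        refine sum_congr rfl fun k hk => ?_
        rw [← sum_powersetCard_walsh, mul_sum]
        exact sum_congr rfl fun T hT => by rw [hconst k hk T hT]
    _ = _ := by
        rw [sum_div]
        exact sum_congr rfl fun k _ => by ring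

end Walsh

/-- Characterization of the `Aut(H_n)`-invariant positive definite functions on the
binary Hamming space: `B : H_n² → ℝ` is positive semidefinite (as a matrix) and
invariant under translations and coordinate permutations if and only if
`B(x,y) = ∑_{k=0}^n a_k K_k^n(d_H(x,y))` for some nonnegative reals `a_0, …, a_n`. -/
theorem invariant_posSemidef_iff_krawtchouk (n : ℕ) (B : (Fin n → ZMod 2) → (Fin n → ZMod 2) → ℝ) :
    ((Matrix.of B).PosSemidef ∧
      (∀ z x y : Fin n → ZMod 2, B (x + z) (y + z) = B x y) ∧
      (∀ π : Equiv.Perm (Fin n), ∀ x y : Fin n → ZMod 2, B (x ∘ π) (y ∘ π) = B x y)) ↔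
    (∃ a : Fin (n + 1) → ℝ, (∀ k, 0 ≤ a k) ∧
      ∀ x y : Fin n → ZMod 2,
        B x y = ∑ k : Fin (n + 1), a k * krawtchouk n k (hammingDist x y)) := by
  constructor
  · rintro ⟨hpsd, htrans, hperm⟩
    have hB (x y : Fin n → ZMod 2) : B x y = B (x + y) 0 := by
      rw [← htrans y x y, ZModModule.add_self]
    obtain ⟨a, ha, hexp⟩ := exists_nonneg_krawtchouk_expansion (f := fun t => B t 0)
      (by simpa only [← hB] using hpsd) (fun π x => hperm π x 0)
    refine ⟨fun k => a k, fun k => ha k, fun x y => ?_⟩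
    rw [hB, hexp, ← hammingDist_eq_hammingNorm_add, Fintype.card_fin,
      Fin.sum_univ_eq_sum_range (fun k => a k * krawtchouk n k (hammingDist x y))]
  · rintro ⟨a, ha, hB⟩
    have hsum : Matrix.of B = ∑ k, a k • Matrix.of fun x y : Fin n → ZMod 2 =>
        krawtchouk n k (hammingDist x y) := by
      ext x y
      simp [hB, Matrix.sum_apply]
    refine ⟨hsum ▸ Matrix.posSemidef_sum _ fun k _ => ?_, fun z x y => ?_, fun π x y => ?_⟩
    · simpa using (posSemidef_krawtchouk (ι := Fin n) k).smul (ha k)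
    · simp only [hB, hammingDist_add_right]
    · simp only [hB, hammingDist_comp_perm]
end

section
/- Let k ≥ 2, let f : H_n^k → ℝ be symmetric under permutations of its arguments, let m ∈ ℝ, and let C ⊆ H_n be a nonempty code with f(x_1, …, x_k) ≥ m for every k-tuple of pairwise distinct elements of C. Define χ_C(z_1,…,z_k) = (1/|C|)·1_C(z_1)⋯1_C(z_k). Then χ_C satisfies: (1) χ_C(z_1,…,z_k) depends only on the set {z_1,…,z_k}; (2) for every fixed (z_3,…,z_k), the matrix (x,y) ↦ χ_C(x,y,z_3,…,z_k) is symmetric positive semidefinite with nonnegative entries; (3) χ_C(z_1,…,z_k) = 0 whenever z_1,…,z_k are pairwise distinct and f(z_1,…,z_k) ≤ m−1; (4) Σ_{x∈H_n} χ_C(x,…,x) = 1; and moreover Σ_{(x,y)∈H_n²} χ_C(x,y,y,…,y) = |C|. -/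
/-!
`χ_C` is `|C|⁻¹` times the indicator that all arguments lie in `C`. This indicator depends only
on the set of arguments and splits off a factor `1_C(x)` per argument, so fixing all but two
arguments leaves the rank-one matrix `c · 1_C 1_Cᵀ` with `c ≥ 0`. A pairwise distinct tuple with
`f < m` cannot lie in `C`, so `χ_C` vanishes on it; the two sums are `|C|/|C|` and `|C|²/|C|`.
-/

open Finset Matrix

theorem Matrix.posSemidef_of_mul_mul_nonneg {α : Type*} [Fintype α] {c : ℝ} (hc : 0 ≤ c)
    (a : α → ℝ) : (Matrix.of fun x y => a x * (a y * c)).PosSemidef := by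
  convert (posSemidef_vecMulVec_self_star a).smul hc using 1
  ext x y
  simp only [of_apply, smul_apply, vecMulVec_apply, star_trivial, smul_eq_mul]
  ring

section CodeChi

variable {ι α : Type*} [DecidableEq α] (C : Finset α)

noncomputable def codeChi [Fintype ι] (z : ι → α) : ℝ :=
  1 / (C.card : ℝ) * ∏ i, if z i ∈ C then (1 : ℝ) else 0

variable {C}

open Classical in
theorem codeChi_eq_ite [Fintype ι] (z : ι → α) :
    codeChi C z = 1 / (C.card : ℝ) * if Set.range z ⊆ C then 1 else 0 := by
  simp only [codeChi, Fintype.prod_boole, Set.range_subset_iff, Finset.mem_coe]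

theorem codeChi_nonneg [Fintype ι] (z : ι → α) : 0 ≤ codeChi C z := by
  rw [codeChi_eq_ite]
  positivity

theorem codeChi_eq_of_range_eq [Fintype ι] {κ : Type*} [Fintype κ] {z : ι → α} {w : κ → α}
    (h : Set.range z = Set.range w) : codeChi C z = codeChi C w := by
  rw [codeChi_eq_ite, codeChi_eq_ite, h]

theorem codeChi_eq_zero_of_notMem [Fintype ι] {z : ι → α} {i : ι} (hi : z i ∉ C) :
    codeChi C z = 0 := by
  rw [codeChi_eq_ite, if_neg fun h => hi (h (Set.mem_range_self i)), mul_zero]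

theorem codeChi_const [Fintype ι] [Nonempty ι] (x : α) :
    codeChi C (fun _ : ι => x) = 1 / (C.card : ℝ) * if x ∈ C then 1 else 0 := by
  simp only [codeChi_eq_ite, Set.range_const, Set.singleton_subset_iff, Finset.mem_coe]

theorem codeChi_cons {k : ℕ} (x : α) (z : Fin k → α) :
    codeChi C (Fin.cons x z : Fin (k + 1) → α) = (if x ∈ C then 1 else 0) * codeChi C z := by
  simp only [codeChi, Fin.prod_univ_succ, Fin.cons_zero, Fin.cons_succ]
  ring

variable [Fintype α]

theorem sum_ite_mem_eq_card : ∑ x : α, (if x ∈ C then (1 : ℝ) else 0) = C.card := by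
  simp

theorem sum_codeChi_const [Fintype ι] [Nonempty ι] (hC : C.Nonempty) :
    ∑ x : α, codeChi C (fun _ : ι => x) = 1 := by
  have hcard : (C.card : ℝ) ≠ 0 := by exact_mod_cast hC.card_pos.ne'
  simp only [codeChi_const, ← Finset.mul_sum, sum_ite_mem_eq_card]
  field_simp

theorem sum_sum_codeChi_cons_const {k : ℕ} :
    ∑ x : α, ∑ y : α, codeChi C (Fin.cons x (fun _ : Fin (k + 1) => y)) = C.card := by
  simp only [codeChi_cons, codeChi_const, ← Finset.mul_sum, ← Finset.sum_mul,
    sum_ite_mem_eq_card]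
  rcases eq_or_ne (C.card : ℝ) 0 with h | h
  · simp [h]
  · field_simp

theorem posSemidef_codeChi_cons_cons {k : ℕ} (z : Fin k → α) :
    (Matrix.of fun x y : α => codeChi C (Fin.cons x (Fin.cons y z))).PosSemidef := by
  simp only [codeChi_cons]
  exact Matrix.posSemidef_of_mul_mul_nonneg (codeChi_nonneg z) _

end CodeChi

theorem chi_C_feasible_general {n k' : ℕ} (f : (Fin (k' + 2) → (Fin n → ZMod 2)) → ℝ)
    (m : ℝ) (C : Finset (Fin n → ZMod 2)) (hC : C.Nonempty)
    (hCf : ∀ z : Fin (k' + 2) → (Fin n → ZMod 2),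
      (∀ i, z i ∈ C) → Function.Injective z → m ≤ f z)
    (χ : (Fin (k' + 2) → (Fin n → ZMod 2)) → ℝ)
    (hχ : ∀ z, χ z = (1 / (C.card : ℝ)) * ∏ i, (if z i ∈ C then (1 : ℝ) else 0)) :
    -- (1) `χ_C` depends only on the underlying set of its arguments
    (∀ z w : Fin (k' + 2) → (Fin n → ZMod 2), Set.range z = Set.range w → χ z = χ w) ∧
    -- (2) for every fixed `(z₃,…,z_k)`, the matrix `(x,y) ↦ χ_C(x,y,z₃,…,z_k)` is
    -- symmetric positive semidefinite with nonnegative entries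
    (∀ z : Fin k' → (Fin n → ZMod 2),
      (Matrix.of fun x y : Fin n → ZMod 2 =>
        χ (Fin.cons x (Fin.cons y z))).PosSemidef ∧
      (∀ x y : Fin n → ZMod 2, 0 ≤ χ (Fin.cons x (Fin.cons y z)))) ∧
    -- (3) `χ_C` vanishes on pairwise distinct `k`-tuples with `f ≤ m−1`
    (∀ z : Fin (k' + 2) → (Fin n → ZMod 2),
      Function.Injective z → f z ≤ m - 1 → χ z = 0) ∧
    -- (4) `∑_x χ_C(x,…,x) = 1`
    (∑ x : Fin n → ZMod 2, χ (fun _ => x)) = 1 ∧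
    -- objective value: `∑_{(x,y)} χ_C(x,y,y,…,y) = |C|`
    (∑ x : Fin n → ZMod 2, ∑ y : Fin n → ZMod 2, χ (Fin.cons x (fun _ => y)))
      = C.card := by
  obtain rfl : χ = codeChi C := funext hχ
  refine ⟨fun z w h => codeChi_eq_of_range_eq h,
    fun z => ⟨posSemidef_codeChi_cons_cons z, fun x y => codeChi_nonneg _⟩,
    fun z hz hfz => ?_, sum_codeChi_const hC, sum_sum_codeChi_cons_const⟩
  have hleave : ∃ i, z i ∉ C := by
    by_contra! hin
    linarith [hCf z hin hz]
  obtain ⟨i, hi⟩ := hleave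
  exact codeChi_eq_zero_of_notMem hi

/-- The function `χ_C(z₁,…,z_k) = (1/|C|)·1_C(z₁)⋯1_C(z_k)` attached to a nonempty code
`C` satisfying `f ≥ m` on pairwise distinct `k`-tuples of `C` (here `k = k'+2 ≥ 2`)
satisfies conditions (1)–(4) of the semidefinite program of Theorem 5, and
`∑_{(x,y)∈H_n²} χ_C(x,y,y,…,y) = |C|`. -/
theorem chi_C_feasible {n k' : ℕ} (f : (Fin (k' + 2) → (Fin n → ZMod 2)) → ℝ)
    (hf : ∀ σ : Equiv.Perm (Fin (k' + 2)), ∀ z, f (z ∘ σ) = f z)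
    (m : ℝ) (C : Finset (Fin n → ZMod 2)) (hC : C.Nonempty)
    (hCf : ∀ z : Fin (k' + 2) → (Fin n → ZMod 2),
      (∀ i, z i ∈ C) → Function.Injective z → m ≤ f z)
    (χ : (Fin (k' + 2) → (Fin n → ZMod 2)) → ℝ)
    (hχ : ∀ z, χ z = (1 / (C.card : ℝ)) * ∏ i, (if z i ∈ C then (1 : ℝ) else 0)) :
    -- (1) `χ_C` depends only on the underlying set of its arguments
    (∀ z w : Fin (k' + 2) → (Fin n → ZMod 2), Set.range z = Set.range w → χ z = χ w) ∧
    -- (2) for every fixed `(z₃,…,z_k)`, the matrix `(x,y) ↦ χ_C(x,y,z₃,…,z_k)` is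
    -- symmetric positive semidefinite with nonnegative entries
    (∀ z : Fin k' → (Fin n → ZMod 2),
      (Matrix.of fun x y : Fin n → ZMod 2 =>
        χ (Fin.cons x (Fin.cons y z))).PosSemidef ∧
      (∀ x y : Fin n → ZMod 2, 0 ≤ χ (Fin.cons x (Fin.cons y z)))) ∧
    -- (3) `χ_C` vanishes on pairwise distinct `k`-tuples with `f ≤ m−1`
    (∀ z : Fin (k' + 2) → (Fin n → ZMod 2),
      Function.Injective z → f z ≤ m - 1 → χ z = 0) ∧
    -- (4) `∑_x χ_C(x,…,x) = 1`
    (∑ x : Fin n → ZMod 2, χ (fun _ => x)) = 1 ∧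
    -- objective value: `∑_{(x,y)} χ_C(x,y,y,…,y) = |C|`
    (∑ x : Fin n → ZMod 2, ∑ y : Fin n → ZMod 2, χ (Fin.cons x (fun _ => y)))
      = C.card :=
  chi_C_feasible_general f m C hC hCf χ hχ
end

section
/- Let 𝒞(H_n) = {f : H_n → ℂ} with Aut(H_n) acting by (g·f)(x) = f(g⁻¹(x)), where Aut(H_n) is generated by translations x ↦ x+z and coordinate permutations. For 0 ≤ k ≤ n let P_k be the ℂ-linear span of the characters χ_z(x) = (−1)^{x·z} with wt(z) = k. Then 𝒞(H_n) = P_0 ⊕ P_1 ⊕ ⋯ ⊕ P_n, each P_k is invariant under the action of Aut(H_n), and each P_k is irreducible: it contains no Aut(H_n)-invariant subspace other than 0 and P_k itself. -/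
/-!
The characters `χ_z` are distinct characters of the group `H_n`, hence linearly independent, and
there are `2^n` of them, so they form a basis of `𝒞(H_n)`; `P_k` is spanned by the basis vectors
of weight `k`, which gives the direct sum. A translation by `t` scales `χ_z` by `χ_z(t)` and a
permutation `π` sends `χ_z` to `χ_{z ∘ π⁻¹}`, of the same weight, which gives invariance. If
`0 ≠ W ≤ P_k` is invariant, pick `f ∈ W` with a nonzero coefficient `c_w` on `χ_w`; by
orthogonality of characters, `∑_t χ_w(t) f(· + t) = 2^n c_w χ_w`, so `χ_w ∈ W`. Permutations act
transitively on the vectors of weight `k`, so `W` contains every `χ_z` spanning `P_k`.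
-/

open Finset

/-- The character `χ_z(x) = (−1)^{x·z}` of `(𝔽₂ⁿ, +)`, as a complex-valued function. -/
def hammingChar {n : ℕ} (z : Fin n → ZMod 2) : (Fin n → ZMod 2) → ℂ :=
  fun x => (-1 : ℂ) ^ (∑ j, x j * z j).val

/-- `P_k`: the `ℂ`-span of the characters `χ_z` with `wt(z) = k`, inside the space
`𝒞(H_n)` of complex-valued functions on the Hamming space. -/
noncomputable def charSpan (n k : ℕ) : Submodule ℂ ((Fin n → ZMod 2) → ℂ) :=
  Submodule.span ℂ {f | ∃ z : Fin n → ZMod 2, hammingNorm z = k ∧ f = hammingChar z}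

theorem Module.Basis.isInternal_span_image_fiber {ι κ R M : Type*} [Ring R] [AddCommGroup M]
    [Module R M] [DecidableEq κ] (b : Module.Basis ι R M) (d : ι → κ) :
    DirectSum.IsInternal fun k => Submodule.span R (b '' (d ⁻¹' {k})) := by
  refine DirectSum.isInternal_submodule_of_iSupIndep_of_iSup_eq_top (fun k => ?_) ?_
  · have hle : ⨆ (j) (_ : j ≠ k), Submodule.span R (b '' (d ⁻¹' {j}))
        ≤ Submodule.span R (b '' (d ⁻¹' {k}ᶜ)) :=
      iSup₂_le fun j hj => Submodule.span_mono <| Set.image_mono fun i hi => by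
        simp_all
    exact (b.linearIndependent.disjoint_span_image disjoint_compl_right).mono_right hle
  · rw [eq_top_iff, ← b.span_eq, Submodule.span_le]
    rintro _ ⟨i, rfl⟩
    exact Submodule.mem_iSup_of_mem (d i) (Submodule.subset_span ⟨i, rfl, rfl⟩)

lemma neg_one_pow_val_add {R : Type*} [Ring R] (a b : ZMod 2) :
    (-1 : R) ^ (a + b).val = (-1) ^ a.val * (-1) ^ b.val := by
  rw [ZMod.val_add, ← pow_add, ← neg_one_pow_eq_pow_mod_two]

lemma neg_one_pow_val_injective {R : Type*} [Ring R] (hR : (-1 : R) ≠ 1) :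
    Function.Injective fun a : ZMod 2 => (-1 : R) ^ a.val := by
  intro a b h
  fin_cases a <;> fin_cases b <;> simp [ZMod.val] at h <;>
    first | rfl | exact absurd h hR | exact absurd h.symm hR

lemma hammingNorm_comp_equiv {ι ι' β : Type*} [Fintype ι] [Fintype ι'] [Zero β]
    [DecidableEq β] (x : ι → β) (e : ι' ≃ ι) : hammingNorm (x ∘ e) = hammingNorm x :=
  Finset.card_equiv e (by simp)

lemma exists_perm_comp_eq_of_hammingNorm_eq {n : ℕ} {z w : Fin n → ZMod 2}
    (h : hammingNorm z = hammingNorm w) : ∃ σ : Equiv.Perm (Fin n), z ∘ σ = w := by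
  have hcard : Fintype.card {i // w i ≠ 0} = Fintype.card {i // z i ≠ 0} := by
    simpa only [Fintype.card_subtype, hammingNorm] using h.symm
  let e := Fintype.equivOfCardEq hcard
  have hunit : ∀ a b : ZMod 2, a ≠ 0 → b ≠ 0 → a = b := by decide
  refine ⟨e.extendSubtype, funext fun i => ?_⟩
  by_cases hi : w i = 0
  · have hz := e.extendSubtype_not_mem i (not_not.2 hi)
    simp only [Function.comp_apply, hi, not_not.1 hz]
  · exact hunit _ _ (e.extendSubtype_mem i hi) hi

section hammingChar

variable {n : ℕ}

lemma hammingChar_comm (z x : Fin n → ZMod 2) : hammingChar z x = hammingChar x z := by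
  simp only [hammingChar, mul_comm]

lemma hammingChar_apply_add (z x y : Fin n → ZMod 2) :
    hammingChar z (x + y) = hammingChar z x * hammingChar z y := by
  simp only [hammingChar, Pi.add_apply, add_mul, sum_add_distrib, neg_one_pow_val_add]

lemma hammingChar_add (z w x : Fin n → ZMod 2) :
    hammingChar (z + w) x = hammingChar z x * hammingChar w x := by
  rw [hammingChar_comm, hammingChar_apply_add, hammingChar_comm x, hammingChar_comm x]

lemma hammingChar_apply_single (z : Fin n → ZMod 2) (j : Fin n) :
    hammingChar z (Pi.single j 1) = (-1) ^ (z j).val := by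
  simp [hammingChar, Pi.single_apply]

lemma hammingChar_injective : Function.Injective (hammingChar (n := n)) := fun z w h =>
  funext fun j => neg_one_pow_val_injective (R := ℂ) (by norm_num) <| by
    simpa only [hammingChar_apply_single] using congrFun h (Pi.single j 1)

def hammingAddChar (z : Fin n → ZMod 2) : AddChar (Fin n → ZMod 2) ℂ where
  toFun := hammingChar z
  map_zero_eq_one' := by simp [hammingChar]
  map_add_eq_mul' := hammingChar_apply_add z

lemma hammingAddChar_eq_zero_iff (z : Fin n → ZMod 2) : hammingAddChar z = 0 ↔ z = 0 := by
  have h0 : hammingAddChar (0 : Fin n → ZMod 2) = 0 := by ext; simp [hammingAddChar, hammingChar]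
  rw [← h0, ← hammingChar_injective.eq_iff, DFunLike.ext'_iff]
  rfl

lemma sum_hammingChar_mul (w z : Fin n → ZMod 2) :
    ∑ t, hammingChar w t * hammingChar z t = if w = z then (2 : ℂ) ^ n else 0 := by
  classical
  have hsum := (hammingAddChar (w + z)).sum_eq_ite
  simp only [hammingAddChar_eq_zero_iff, add_eq_zero_iff_eq_neg, ZModModule.neg_eq_self] at hsum
  simpa [hammingAddChar, hammingChar_add, Fintype.card_pi] using hsum

lemma linearIndependent_hammingChar : LinearIndependent ℂ (hammingChar (n := n)) :=
  (AddChar.linearIndependent _ ℂ).comp hammingAddChar fun _ _ h =>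
    hammingChar_injective (congrArg DFunLike.coe h)

lemma hammingChar_comp_add (z t : Fin n → ZMod 2) :
    hammingChar z ∘ (· + t) = hammingChar z t • hammingChar z := by
  funext x
  simp [hammingChar_apply_add, mul_comm]

lemma hammingChar_comp_perm (z : Fin n → ZMod 2) (π : Equiv.Perm (Fin n)) :
    hammingChar z ∘ (· ∘ π) = hammingChar (z ∘ π.symm) := by
  funext x
  show hammingChar z (x ∘ π) = _
  simp only [hammingChar, Function.comp_apply]
  rw [← Equiv.sum_comp π fun j => x j * z (π.symm j)]
  simp

variable (n) in
noncomputable def hammingCharBasis : Module.Basis (Fin n → ZMod 2) ℂ ((Fin n → ZMod 2) → ℂ) :=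
  basisOfLinearIndependentOfCardEqFinrank linearIndependent_hammingChar
    (by simp [Module.finrank_fintype_fun_eq_card])

lemma coe_hammingCharBasis : ⇑(hammingCharBasis n) = hammingChar :=
  coe_basisOfLinearIndependentOfCardEqFinrank _ _

lemma sum_hammingChar_smul_comp_add (w : Fin n → ZMod 2) (f : (Fin n → ZMod 2) → ℂ) :
    ∑ t, hammingChar w t • f ∘ (· + t) =
      ((2 : ℂ) ^ n * (hammingCharBasis n).repr f w) • hammingChar w := by
  have key : ∑ t, hammingChar w t • LinearMap.funLeft ℂ ℂ (· + t) =
      (2 : ℂ) ^ n • ((hammingCharBasis n).coord w).smulRight (hammingChar w) := by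
    refine (hammingCharBasis n).ext fun z => ?_
    simp only [LinearMap.coe_sum, Finset.sum_apply, LinearMap.smul_apply,
      LinearMap.smulRight_apply, Module.Basis.coord_apply, Module.Basis.repr_self]
    rw [coe_hammingCharBasis]
    change ∑ t, hammingChar w t • (hammingChar z ∘ (· + t)) = _
    simp_rw [hammingChar_comp_add, smul_smul, ← Finset.sum_smul, sum_hammingChar_mul]
    by_cases h : w = z <;> simp [h]
  have hf := LinearMap.congr_fun key f
  simp only [LinearMap.coe_sum, Finset.sum_apply, LinearMap.smul_apply,
    LinearMap.smulRight_apply, Module.Basis.coord_apply, smul_smul] at hf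
  exact hf

lemma hammingChar_mem_of_repr_ne_zero {W : Submodule ℂ ((Fin n → ZMod 2) → ℂ)}
    (hW : ∀ t, ∀ f ∈ W, f ∘ (· + t) ∈ W) {f : (Fin n → ZMod 2) → ℂ} (hf : f ∈ W)
    {w : Fin n → ZMod 2} (hw : (hammingCharBasis n).repr f w ≠ 0) : hammingChar w ∈ W := by
  have hsum := W.sum_mem fun t (_ : t ∈ Finset.univ) => W.smul_mem (hammingChar w t) (hW t f hf)
  rw [sum_hammingChar_smul_comp_add] at hsum
  exact (W.smul_mem_iff (mul_ne_zero (pow_ne_zero _ two_ne_zero) hw)).1 hsum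

end hammingChar

section charSpan

variable {n k : ℕ}

lemma charSpan_eq_span_image :
    charSpan n k = Submodule.span ℂ (hammingCharBasis n '' {z | hammingNorm z = k}) := by
  rw [coe_hammingCharBasis, charSpan]
  exact congrArg _ (Set.ext fun f => exists_congr fun z => and_congr Iff.rfl eq_comm)

lemma hammingChar_mem_charSpan {z : Fin n → ZMod 2} (hz : hammingNorm z = k) :
    hammingChar z ∈ charSpan n k :=
  Submodule.subset_span ⟨z, hz, rfl⟩

variable (n) in
theorem isInternal_charSpan :
    DirectSum.IsInternal fun k : Fin (n + 1) => charSpan n k := by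
  have hweight (z : Fin n → ZMod 2) : hammingNorm z < n + 1 :=
    Nat.lt_succ_of_le (hammingNorm_le_card_fintype.trans (Fintype.card_fin n).le)
  have hfiber (k : Fin (n + 1)) : charSpan n k =
      Submodule.span ℂ (hammingCharBasis n '' ((fun z => ⟨_, hweight z⟩) ⁻¹' {k})) := by
    rw [charSpan_eq_span_image]
    congr! 2
    ext z
    simp [Fin.ext_iff]
  simp_rw [hfiber]
  exact (hammingCharBasis n).isInternal_span_image_fiber _

lemma comp_mem_charSpan {φ : (Fin n → ZMod 2) → Fin n → ZMod 2}
    (hφ : ∀ z, hammingNorm z = k → hammingChar z ∘ φ ∈ charSpan n k)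
    {f : (Fin n → ZMod 2) → ℂ} (hf : f ∈ charSpan n k) : f ∘ φ ∈ charSpan n k :=
  (Submodule.map_span_le (LinearMap.funLeft ℂ ℂ φ) _ (charSpan n k)).2
    (by rintro _ ⟨z, hz, rfl⟩; exact hφ z hz) (Submodule.mem_map_of_mem hf)

lemma comp_add_mem_charSpan (t : Fin n → ZMod 2) {f : (Fin n → ZMod 2) → ℂ}
    (hf : f ∈ charSpan n k) : f ∘ (· + t) ∈ charSpan n k :=
  comp_mem_charSpan (fun z hz => by
    rw [hammingChar_comp_add]
    exact Submodule.smul_mem _ _ (hammingChar_mem_charSpan hz)) hf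

lemma comp_perm_mem_charSpan (π : Equiv.Perm (Fin n)) {f : (Fin n → ZMod 2) → ℂ}
    (hf : f ∈ charSpan n k) : f ∘ (· ∘ π) ∈ charSpan n k :=
  comp_mem_charSpan (fun z hz => by
    rw [hammingChar_comp_perm]
    exact hammingChar_mem_charSpan ((hammingNorm_comp_equiv z _).trans hz)) hf

theorem eq_bot_or_eq_charSpan_of_invariant {W : Submodule ℂ ((Fin n → ZMod 2) → ℂ)}
    (hle : W ≤ charSpan n k) (htrans : ∀ t, ∀ f ∈ W, f ∘ (· + t) ∈ W)
    (hperm : ∀ π : Equiv.Perm (Fin n), ∀ f ∈ W, f ∘ (· ∘ π) ∈ W) :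
    W = ⊥ ∨ W = charSpan n k := by
  refine or_iff_not_imp_left.2 fun hW => le_antisymm hle ?_
  obtain ⟨f, hfW, hf0⟩ := W.ne_bot_iff.1 hW
  obtain ⟨w, hw⟩ : ∃ w, (hammingCharBasis n).repr f w ≠ 0 := by
    by_contra! h
    exact hf0 ((hammingCharBasis n).repr.map_eq_zero_iff.1 (Finsupp.ext h))
  have hwk : hammingNorm w = k := by
    have hf := hle hfW
    rw [charSpan_eq_span_image, Module.Basis.mem_span_image] at hf
    exact hf (Finsupp.mem_support_iff.2 hw)
  rw [charSpan, Submodule.span_le]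
  rintro _ ⟨z, hz, rfl⟩
  obtain ⟨σ, rfl⟩ := exists_perm_comp_eq_of_hammingNorm_eq (hwk.trans hz.symm)
  simpa [hammingChar_comp_perm] using hperm σ.symm _
    (hammingChar_mem_of_repr_ne_zero htrans hfW hw)

end charSpan

/-- The decomposition `𝒞(H_n) = P_0 ⊕ ⋯ ⊕ P_n`: the subspaces `P_k` form an internal
direct sum decomposition of the space of complex-valued functions on `H_n`, each `P_k`
is invariant under the action of `Aut(H_n)` (generated by translations and coordinate
permutations, acting by `(g·f)(x) = f(g⁻¹ x)`), and each `P_k` is irreducible: it has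
no invariant subspace other than `0` and `P_k` itself. -/
theorem charSpan_decomposition (n : ℕ) :
    -- `𝒞(H_n) = P_0 ⊕ P_1 ⊕ ⋯ ⊕ P_n`
    DirectSum.IsInternal (fun k : Fin (n + 1) => charSpan n k) ∧
    -- each `P_k` is `Aut(H_n)`-invariant
    (∀ k : Fin (n + 1),
      (∀ z : Fin n → ZMod 2, ∀ f ∈ charSpan n k,
        (fun x => f (x + z)) ∈ charSpan n k) ∧
      (∀ π : Equiv.Perm (Fin n), ∀ f ∈ charSpan n k,
        (fun x => f (x ∘ π)) ∈ charSpan n k)) ∧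
    -- each `P_k` is irreducible
    (∀ k : Fin (n + 1), ∀ W : Submodule ℂ ((Fin n → ZMod 2) → ℂ),
      W ≤ charSpan n k →
      (∀ z : Fin n → ZMod 2, ∀ f ∈ W, (fun x => f (x + z)) ∈ W) →
      (∀ π : Equiv.Perm (Fin n), ∀ f ∈ W, (fun x => f (x ∘ π)) ∈ W) →
      W = ⊥ ∨ W = charSpan n k) :=
  ⟨isInternal_charSpan n,
    fun _ => ⟨fun t _ => comp_add_mem_charSpan t, fun π _ => comp_perm_mem_charSpan π⟩,
    fun _ _ hle htrans hperm => eq_bot_or_eq_charSpan_of_invariant hle htrans hperm⟩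
end
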